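/- arXiv:1904.03843 — 3 statements merged into one kernel-verified Lean document; each statement's English description precedes it below -/
import Mathlib

section
/- Let d ≥ 1 and let (V,H) and (V,H') be paving truncated boolean representable simplicial complexes of dimension d on the same vertex set V. Then (V, H ∪ H') is also a paving truncated boolean representable simplicial complex of dimension d. -/
open scoped Classical

variable {V : Type*}

/-- A (finite) simplicial complex on vertex set `V`: all singletons are faces and
faces are closed under taking subsets. -/
def IsSimplicialComplex [DecidableEq V] (H : Set (Finset V)) : Prop :=
  (∀ v : V, {v} ∈ H) ∧ ∀ X ∈ H, ∀ Y ⊆ X, Y ∈ H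

/-- `F` is a flat of the complex with faces `H`. -/
def IsFlat [DecidableEq V] (H : Set (Finset V)) (F : Finset V) : Prop :=
  ∀ I ∈ H, I ⊆ F → ∀ p ∉ F, insert p I ∈ H

/-- `X` is a facet (maximal face) of `H`. -/
def IsFacet (H : Set (Finset V)) (X : Finset V) : Prop :=
  X ∈ H ∧ ∀ Y ∈ H, X ⊆ Y → Y = X

/-- The `k`-truncation of the family of faces `H`. -/
def trunc (H : Set (Finset V)) (k : ℕ) : Set (Finset V) :=
  {X ∈ H | X.card ≤ k}

/-- `H` has dimension `d`: some face has `d+1` elements and all faces have at most `d+1`. -/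
def HasDim (H : Set (Finset V)) (d : ℕ) : Prop :=
  (∃ X ∈ H, X.card = d + 1) ∧ ∀ X ∈ H, X.card ≤ d + 1

/-- `H` is paving of dimension `d`: every `d`-subset is a face and the maximal face
cardinality is `d+1`. -/
def PavingDim (H : Set (Finset V)) (d : ℕ) : Prop :=
  (∀ X : Finset V, X.card = d → X ∈ H) ∧ (∃ X ∈ H, X.card = d + 1) ∧
    ∀ X ∈ H, X.card ≤ d + 1

/-- `X` is a transversal of the successive differences for a chain
`C 0 ⊆ C 1 ⊆ … ⊆ C k` in the family `F`, i.e. `X` enumerates as `x 0, …, x (k-1)`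
with `x i ∈ C (i+1) \ C i`. -/
def Transversal [DecidableEq V] (F : Set (Finset V)) (X : Finset V) : Prop :=
  ∃ (k : ℕ) (x : Fin k → V) (C : Fin (k + 1) → Finset V),
    Function.Injective x ∧
    X = Finset.image x Finset.univ ∧
    (∀ i, C i ∈ F) ∧
    (∀ i : Fin k, C i.castSucc ⊆ C i.succ) ∧
    (∀ i : Fin k, x i ∈ C i.succ ∧ x i ∉ C i.castSucc)

/-- The set of all transversals of the successive differences for chains in `F`. -/
def Tr [DecidableEq V] (F : Set (Finset V)) : Set (Finset V) :=
  {X | Transversal F X}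

/-- `H` is boolean representable: its faces are exactly the transversals of the
successive differences for chains in its lattice of flats. -/
def BooleanRepresentable [DecidableEq V] (H : Set (Finset V)) : Prop :=
  H = Tr {F | IsFlat H F}

/-- The family `ε(S)` for a complex of dimension `d`. -/
def eps [DecidableEq V] (H : Set (Finset V)) (d : ℕ) : Set (Finset V) :=
  {X | ∀ Y ∈ H, Y ⊆ X → Y.card ≤ d → ∀ p ∉ X, insert p Y ∈ H}

/-- `H` is a truncated boolean representable simplicial complex. -/
def IsTBRSC [DecidableEq V] (H : Set (Finset V)) : Prop :=
  ∃ (H' : Set (Finset V)) (k : ℕ), 1 ≤ k ∧ IsSimplicialComplex H' ∧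
    BooleanRepresentable H' ∧ H = trunc H' k

/-- The complex `B_d(V,L)`. -/
def Bd [DecidableEq V] (d : ℕ) (L : Finset V) : Set (Finset V) :=
  {X | X.card ≤ d} ∪ {X | X.card = d + 1 ∧ (X ∩ L).card = d}

/-- The closure of `X`: the intersection of all flats containing `X`. -/
noncomputable def cl [Fintype V] [DecidableEq V] (H : Set (Finset V)) (X : Finset V) :
    Finset V :=
  Finset.univ.filter fun v => ∀ F : Finset V, IsFlat H F → X ⊆ F → v ∈ F

/-- `H` is a near-matroid. -/
def NearMatroid [Fintype V] [DecidableEq V] (H : Set (Finset V)) : Prop :=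
  ∀ X ∈ H, ∀ Y ∈ H, cl H X = cl H Y → cl H X ≠ Finset.univ → X.card = Y.card

/-- `H` is a matroid: a simplicial complex with the exchange property. -/
def IsMatroid [DecidableEq V] (H : Set (Finset V)) : Prop :=
  IsSimplicialComplex H ∧
    ∀ I ∈ H, ∀ J ∈ H, I.card = J.card + 1 → ∃ i ∈ I, i ∉ J ∧ insert i J ∈ H

section Helpers

variable {V : Type*}

private lemma chainN_mono {k : ℕ} {C : ℕ → Finset V} (h : ∀ i < k, C i ⊆ C (i+1)) :
    ∀ i j, i ≤ j → j ≤ k → C i ⊆ C j := by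
  intro i j hij hjk
  induction j with
  | zero =>
    have : i = 0 := by omega
    subst this; exact subset_rfl
  | succ n ih =>
    rcases Nat.eq_or_lt_of_le hij with h1 | h1
    · subst h1; exact subset_rfl
    · exact (ih (by omega) (by omega)).trans (h n (by omega))

/-- An `ℕ`-indexed reformulation of `Transversal`. -/
private def TransN [DecidableEq V] (F : Set (Finset V)) (X : Finset V) : Prop :=
  ∃ (k : ℕ) (x : ℕ → V) (C : ℕ → Finset V),
    (∀ i < k, ∀ j < k, x i = x j → i = j) ∧
    X = (Finset.range k).image x ∧
    (∀ i ≤ k, C i ∈ F) ∧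
    (∀ i < k, C i ⊆ C (i+1)) ∧
    (∀ i < k, x i ∈ C (i+1) ∧ x i ∉ C i)

private lemma transversal_iff_transN [DecidableEq V] [Nonempty V] {F : Set (Finset V)}
    {X : Finset V} : Transversal F X ↔ TransN F X := by
  constructor
  · rintro ⟨k, x, C, hinj, hX, hCF, hmono, hx⟩
    refine ⟨k, fun n => if h : n < k then x ⟨n, h⟩ else Classical.arbitrary V,
      fun n => if h : n ≤ k then C ⟨n, by omega⟩ else C ⟨k, by omega⟩, ?_, ?_, ?_, ?_, ?_⟩
    · intro i hi j hj hxe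
      simp only [dif_pos hi, dif_pos hj] at hxe
      simpa [Fin.ext_iff] using hinj hxe
    · rw [hX]; ext v
      simp only [Finset.mem_image, Finset.mem_univ, true_and, Finset.mem_range]
      constructor
      · rintro ⟨i, rfl⟩; exact ⟨i, i.isLt, by simp only [dif_pos i.isLt]⟩
      · rintro ⟨n, hn, rfl⟩; exact ⟨⟨n, hn⟩, by simp only [dif_pos hn]⟩
    · intro i hi; simp only [dif_pos hi]; exact hCF _
    · intro i hi
      simp only [dif_pos (by omega : i ≤ k), dif_pos (by omega : i + 1 ≤ k)]
      exact hmono ⟨i, hi⟩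
    · intro i hi
      simp only [dif_pos hi, dif_pos (by omega : i + 1 ≤ k), dif_pos (by omega : i ≤ k)]
      exact hx ⟨i, hi⟩
  · rintro ⟨k, x, C, hinj, hX, hCF, hmono, hx⟩
    refine ⟨k, fun i => x i, fun i => C i, ?_, ?_, fun i => hCF i (by omega),
      fun i => hmono i i.isLt, fun i => hx i i.isLt⟩
    · intro a b hab
      exact Fin.ext (hinj a a.isLt b b.isLt hab)
    · rw [hX]; ext v
      simp only [Finset.mem_image, Finset.mem_range, Finset.mem_univ, true_and]
      constructor
      · rintro ⟨n, hn, rfl⟩; exact ⟨⟨n, hn⟩, rfl⟩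
      · rintro ⟨i, rfl⟩; exact ⟨i, i.isLt, rfl⟩

private lemma transN_erase [DecidableEq V] {F : Set (Finset V)} {X : Finset V} (a : V)
    (h : TransN F X) : TransN F (X.erase a) := by
  by_cases ha : a ∈ X
  swap
  · rwa [Finset.erase_eq_of_notMem ha]
  obtain ⟨k, x, C, hinj, hX, hCF, hmono, hx⟩ := h
  have : ∃ t, t < k ∧ x t = a := by
    rw [hX] at ha
    simp only [Finset.mem_image, Finset.mem_range] at ha
    obtain ⟨t, ht, hta⟩ := ha
    exact ⟨t, ht, hta⟩
  obtain ⟨t, htk, hta⟩ := this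
  have hm := chainN_mono hmono
  refine ⟨k - 1, fun i => if i < t then x i else x (i+1),
    fun i => if i ≤ t then C i else C (i+1), ?_, ?_, ?_, ?_, ?_⟩
  · intro i hi j hj hxe
    dsimp only at hxe
    split_ifs at hxe with h1 h2 h2 <;>
      · have := hinj _ (by omega) _ (by omega) hxe; omega
  · ext v
    simp only [Finset.mem_erase, hX, Finset.mem_image, Finset.mem_range]
    constructor
    · rintro ⟨hva, i, hik, rfl⟩
      have hit : i ≠ t := by
        intro h; exact hva (by rw [h, hta])
      by_cases h : i < t
      · exact ⟨i, by omega, by rw [if_pos h]⟩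
      · refine ⟨i - 1, by omega, ?_⟩
        rw [if_neg (by omega)]
        congr 1; omega
    · rintro ⟨j, hj, rfl⟩
      by_cases h : j < t
      · rw [if_pos h]
        refine ⟨?_, j, by omega, rfl⟩
        intro he
        have := hinj j (by omega) t htk (by rw [he, hta])
        omega
      · rw [if_neg h]
        refine ⟨?_, j + 1, by omega, rfl⟩
        intro he
        have := hinj (j+1) (by omega) t htk (by rw [he, hta])
        omega
  · intro i hi
    dsimp only
    split_ifs <;> exact hCF _ (by omega)
  · intro i hi
    show (if i ≤ t then C i else C (i+1)) ⊆ (if i + 1 ≤ t then C (i+1) else C (i+2))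
    by_cases h1 : i ≤ t
    · rw [if_pos h1]
      by_cases h2 : i + 1 ≤ t
      · rw [if_pos h2]; exact hmono i (by omega)
      · rw [if_neg h2]; exact hm i (i+2) (by omega) (by omega)
    · rw [if_neg h1, if_neg (by omega : ¬ (i + 1 ≤ t))]
      exact hmono (i+1) (by omega)
  · intro i hi
    constructor
    · show (if i < t then x i else x (i+1)) ∈ (if i + 1 ≤ t then C (i+1) else C (i+2))
      by_cases h1 : i < t
      · rw [if_pos h1, if_pos (by omega : i + 1 ≤ t)]
        exact (hx i (by omega)).1
      · rw [if_neg h1, if_neg (by omega : ¬ (i + 1 ≤ t))]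
        exact (hx (i+1) (by omega)).1
    · show (if i < t then x i else x (i+1)) ∉ (if i ≤ t then C i else C (i+1))
      by_cases h1 : i < t
      · rw [if_pos h1, if_pos (by omega : i ≤ t)]
        exact (hx i (by omega)).2
      · rw [if_neg h1]
        by_cases h2 : i ≤ t
        · rw [if_pos h2]
          intro hmem
          exact (hx (i+1) (by omega)).2 (hm i (i+1) (by omega) (by omega) hmem)
        · rw [if_neg h2]
          exact (hx (i+1) (by omega)).2

private lemma transN_subset [DecidableEq V] {F : Set (Finset V)} {X Y : Finset V}
    (hT : TransN F X) (hYX : Y ⊆ X) : TransN F Y := by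
  have key : ∀ n (X Y : Finset V), X.card ≤ n → TransN F X → Y ⊆ X → TransN F Y := by
    intro n
    induction n with
    | zero =>
      intro X Y hc hT hYX
      have hX : X = ∅ := Finset.card_eq_zero.mp (Nat.le_zero.mp hc)
      have : Y = ∅ := Finset.subset_empty.mp (hX ▸ hYX)
      rwa [this, ← hX]
    | succ n ih =>
      intro X Y hc hT hYX
      by_cases hXY : X = Y
      · rwa [← hXY]
      · have : ∃ a ∈ X, a ∉ Y := by
          by_contra hcon
          push_neg at hcon
          exact hXY (Finset.Subset.antisymm hcon hYX)
        obtain ⟨a, haX, haY⟩ := this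
        refine ih (X.erase a) Y ?_ (transN_erase a hT) ?_
        · rw [Finset.card_erase_of_mem haX]; omega
        · intro y hy
          exact Finset.mem_erase.mpr ⟨fun h => haY (h ▸ hy), hYX hy⟩
  exact key X.card X Y le_rfl hT hYX

private lemma tr_mono [DecidableEq V] {F F' : Set (Finset V)} (h : F ⊆ F') :
    Tr F ⊆ Tr F' := by
  rintro X ⟨k, x, C, h1, h2, h3, h4, h5⟩
  exact ⟨k, x, C, h1, h2, fun i => h (h3 i), h4, h5⟩

private lemma tr_flats_subset [DecidableEq V] [Nonempty V] {S : Set (Finset V)}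
    (hS : IsSimplicialComplex S) : Tr {F | IsFlat S F} ⊆ S := by
  intro X hX
  have hX' : TransN {F | IsFlat S F} X := transversal_iff_transN.mp hX
  obtain ⟨k, x, C, hinj, hXim, hCF, hmono, hx⟩ := hX'
  have hm := chainN_mono hmono
  have key : ∀ n, n ≤ k → (Finset.range n).image x ∈ S := by
    intro n
    induction n with
    | zero =>
      intro _
      simpa using hS.2 _ (hS.1 (Classical.arbitrary V)) ∅ (Finset.empty_subset _)
    | succ n ih =>
      intro hn
      rw [Finset.range_add_one, Finset.image_insert]
      refine hCF n (by omega) _ (ih (by omega)) ?_ _ (hx n (by omega)).2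
      intro v hv
      simp only [Finset.mem_image, Finset.mem_range] at hv
      obtain ⟨j, hj, rfl⟩ := hv
      exact hm (j+1) n (by omega) (by omega) (hx j (by omega)).1

  rw [hXim]
  exact key k le_rfl

private lemma isFlat_tr_of_moore [Fintype V] [DecidableEq V] [Nonempty V]
    {F : Set (Finset V)} (hu : Finset.univ ∈ F)
    (hint : ∀ A ∈ F, ∀ B ∈ F, A ∩ B ∈ F)
    {F0 : Finset V} (hF0 : F0 ∈ F) : IsFlat (Tr F) F0 := by
  intro I hI hIF0 p hp
  have hI' : TransN F I := transversal_iff_transN.mp hI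
  obtain ⟨k, x, C, hinj, hX, hCF, hmono, hx⟩ := hI'
  have hxF0 : ∀ m, m < k → x m ∈ F0 := by
    intro m hm
    exact hIF0 (by rw [hX]; exact Finset.mem_image_of_mem x (Finset.mem_range.mpr hm))
  refine Set.mem_setOf_eq ▸ transversal_iff_transN.mpr
    ⟨k+1, fun i => if i < k then x i else p,
      fun i => if i ≤ k then C i ∩ F0 else Finset.univ, ?_, ?_, ?_, ?_, ?_⟩
  · intro i hi j hj hxe
    dsimp only at hxe
    split_ifs at hxe with h1 h2 h2
    · exact hinj _ h1 _ h2 hxe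
    · exact absurd (hxe ▸ hxF0 i h1) hp
    · exact absurd (hxe ▸ hxF0 j h2) hp
    · omega
  · ext v
    simp only [Finset.mem_insert, hX, Finset.mem_image, Finset.mem_range]
    constructor
    · rintro (rfl | ⟨i, hik, rfl⟩)
      · exact ⟨k, by omega, by rw [if_neg (lt_irrefl k)]⟩
      · exact ⟨i, by omega, by rw [if_pos hik]⟩
    · rintro ⟨i, hik, rfl⟩
      by_cases h : i < k
      · right; exact ⟨i, h, by rw [if_pos h]⟩
      · left; rw [if_neg h]
  · intro i hik
    show (if i ≤ k then C i ∩ F0 else Finset.univ) ∈ F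
    by_cases h : i ≤ k
    · rw [if_pos h]; exact hint _ (hCF i h) _ hF0
    · rw [if_neg h]; exact hu
  · intro i hik
    show (if i ≤ k then C i ∩ F0 else Finset.univ) ⊆
      (if i + 1 ≤ k then C (i+1) ∩ F0 else Finset.univ)
    by_cases h2 : i + 1 ≤ k
    · rw [if_pos (by omega : i ≤ k), if_pos h2]
      exact Finset.inter_subset_inter (hmono i (by omega)) subset_rfl
    · rw [if_neg h2]
      exact Finset.subset_univ _
  · intro i hik
    constructor
    · show (if i < k then x i else p) ∈ (if i + 1 ≤ k then C (i+1) ∩ F0 else Finset.univ)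
      by_cases h1 : i < k
      · rw [if_pos h1, if_pos (by omega : i + 1 ≤ k)]
        exact Finset.mem_inter.mpr ⟨(hx i h1).1, hxF0 i h1⟩
      · rw [if_neg h1, if_neg (by omega : ¬ (i + 1 ≤ k))]
        exact Finset.mem_univ _
    · show (if i < k then x i else p) ∉ (if i ≤ k then C i ∩ F0 else Finset.univ)
      rw [if_pos (by omega : i ≤ k)]
      by_cases h1 : i < k
      · rw [if_pos h1]
        intro hmem; exact (hx i h1).2 (Finset.mem_inter.mp hmem).1
      · rw [if_neg h1]
        intro hmem; exact hp (Finset.mem_inter.mp hmem).2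

end Helpers


theorem stmt_10 [Fintype V] [DecidableEq V] [Nonempty V] (d : ℕ) (hd : 1 ≤ d)
    (H H' : Set (Finset V)) (hS : IsSimplicialComplex H) (hS' : IsSimplicialComplex H')
    (hp : PavingDim H d) (hp' : PavingDim H' d) (hT : IsTBRSC H) (hT' : IsTBRSC H') :
    PavingDim (H ∪ H') d ∧ IsTBRSC (H ∪ H') := by
  classical
  obtain ⟨hHd, ⟨X0, hX0, hX0c⟩, hHle⟩ := hp
  obtain ⟨hH'd, ⟨X0', hX0', hX0c'⟩, hH'le⟩ := hp'
  obtain ⟨G, k, hk1, hGsc, hGbr, hGtr⟩ := hT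
  obtain ⟨G', k', hk1', hG'sc, hG'br, hG'tr⟩ := hT'
  have hGbr' : G = Tr {F | IsFlat G F} := hGbr
  have hG'br' : G' = Tr {F | IsFlat G' F} := hG'br
  have hcardV : d + 1 ≤ Fintype.card V := hX0c ▸ Finset.card_le_univ X0
  have hsmall : ∀ (H₀ : Set (Finset V)), IsSimplicialComplex H₀ →
      (∀ X : Finset V, X.card = d → X ∈ H₀) →
      ∀ X : Finset V, X.card ≤ d → X ∈ H₀ := by
    intro H₀ hsc₀ hd₀ X hX
    obtain ⟨Z, hXZ, hZc⟩ := Finset.exists_superset_card_eq hX (by omega)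
    exact hsc₀.2 Z (hd₀ Z hZc) X hXZ
  have hsmallH : ∀ X : Finset V, X.card ≤ d → X ∈ H := hsmall H hS hHd
  have hsmallH' : ∀ X : Finset V, X.card ≤ d → X ∈ H' := hsmall H' hS' hH'd
  have hunivE : Finset.univ ∈ eps (H ∪ H') d := by
    intro Y hY hsub hc p hpn
    exact absurd (Finset.mem_univ p) hpn
  have hinterE : ∀ A ∈ eps (H ∪ H') d, ∀ B ∈ eps (H ∪ H') d,
      A ∩ B ∈ eps (H ∪ H') d := by
    intro A hA B hB Y hY hsub hc p hpn
    by_cases hpA : p ∈ A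
    · have hpB : p ∉ B := fun h => hpn (Finset.mem_inter.mpr ⟨hpA, h⟩)
      exact hB Y hY (hsub.trans Finset.inter_subset_right) hc p hpB
    · exact hA Y hY (hsub.trans Finset.inter_subset_left) hc p hpA
  have hdk : d + 1 ≤ k := by
    have h1 : X0 ∈ trunc G k := hGtr ▸ hX0
    have h2 := h1.2
    omega
  have hdk' : d + 1 ≤ k' := by
    have h1 : X0' ∈ trunc G' k' := hG'tr ▸ hX0'
    have h2 := h1.2
    omega
  have flat_mem_E : ∀ (H₀ G₀ : Set (Finset V)) (k₀ : ℕ),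
      (∀ X : Finset V, X.card ≤ d → X ∈ H₀) → H₀ = trunc G₀ k₀ → d + 1 ≤ k₀ →
      H₀ ⊆ H ∪ H' → ∀ F0 : Finset V, IsFlat G₀ F0 → F0 ∈ eps (H ∪ H') d := by
    intro H₀ G₀ k₀ hsmall₀ htr₀ hdk₀ hsub₀ F0 hF0
    intro Y hY hYF0 hYc p hpF0
    have hYH₀ : Y ∈ H₀ := hsmall₀ Y hYc
    have hYG₀ : Y ∈ G₀ := by rw [htr₀] at hYH₀; exact hYH₀.1
    have h1 : insert p Y ∈ G₀ := hF0 Y hYG₀ hYF0 p hpF0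
    have hc : (insert p Y).card ≤ k₀ :=
      le_trans (Finset.card_insert_le p Y) (by omega)
    have h2 : insert p Y ∈ H₀ := by rw [htr₀]; exact ⟨h1, hc⟩
    exact hsub₀ h2
  have hHsubTr : H ⊆ Tr (eps (H ∪ H') d) := by
    intro X hX
    have hXG : X ∈ G := by rw [hGtr] at hX; exact hX.1
    have h1 : X ∈ Tr {F | IsFlat G F} := by rw [← hGbr']; exact hXG
    exact tr_mono
      (fun F0 hF0 => flat_mem_E H G k hsmallH hGtr hdk (fun _ h => Or.inl h) F0 hF0) h1
  have hH'subTr : H' ⊆ Tr (eps (H ∪ H') d) := by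
    intro X hX
    have hXG : X ∈ G' := by rw [hG'tr] at hX; exact hX.1
    have h1 : X ∈ Tr {F | IsFlat G' F} := by rw [← hG'br']; exact hXG
    exact tr_mono
      (fun F0 hF0 => flat_mem_E H' G' k' hsmallH' hG'tr hdk' (fun _ h => Or.inr h) F0 hF0) h1
  have hTrSC : IsSimplicialComplex (Tr (eps (H ∪ H') d)) := by
    constructor
    · intro v
      exact hHsubTr (hsmallH {v} (by simp; omega))
    · intro X hX Y hYX
      exact transversal_iff_transN.mpr (transN_subset (transversal_iff_transN.mp hX) hYX)
  refine ⟨⟨fun X hX => Or.inl (hHd X hX), ⟨X0, Or.inl hX0, hX0c⟩, ?_⟩,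
    Tr (eps (H ∪ H') d), d + 1, by omega, hTrSC, ?_, ?_⟩
  · rintro X (hX | hX)
    exacts [hHle X hX, hH'le X hX]
  · -- BooleanRepresentable
    apply Set.Subset.antisymm
    · exact tr_mono (fun F0 hF0 => isFlat_tr_of_moore hunivE hinterE hF0)
    · exact tr_flats_subset hTrSC
  · -- trunc equality
    ext X
    constructor
    · rintro (hX | hX)
      · exact ⟨hHsubTr hX, hHle X hX⟩
      · exact ⟨hH'subTr hX, hH'le X hX⟩
    · rintro ⟨hXTr, hXc⟩
      by_cases hXd : X.card ≤ d
      · exact Or.inl (hsmallH X hXd)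
      · have hXc' : X.card = d + 1 := by omega
        obtain ⟨kk, x, C, hinj, hXim, hCF, hmono, hx⟩ := transversal_iff_transN.mp hXTr
        have hm := chainN_mono hmono
        have hinjOn : Set.InjOn x ↑(Finset.range kk) := by
          intro a ha b hb hab
          exact hinj a (by simpa using ha) b (by simpa using hb) hab
        have hkk : kk = d + 1 := by
          have h1 := Finset.card_image_of_injOn hinjOn
          rw [← hXim, Finset.card_range] at h1
          omega
        have hdkk : d < kk := by omega
        have hxd : x d ∈ X := by
          rw [hXim]; exact Finset.mem_image_of_mem x (Finset.mem_range.mpr hdkk)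
        have hYc : (X.erase (x d)).card = d := by
          rw [Finset.card_erase_of_mem hxd]; omega
        have hYsub : X.erase (x d) ⊆ C d := by
          intro v hv
          obtain ⟨hvne, hvX⟩ := Finset.mem_erase.mp hv
          rw [hXim] at hvX
          simp only [Finset.mem_image, Finset.mem_range] at hvX
          obtain ⟨j, hj, rfl⟩ := hvX
          have hjd : j ≠ d := fun h => hvne (by rw [h])
          exact hm (j+1) d (by omega) (by omega) (hx j hj).1
        have hCd : C d ∈ eps (H ∪ H') d := hCF d (by omega)
        have h1 := hCd (X.erase (x d)) (Or.inl (hsmallH _ (le_of_eq hYc))) hYsub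
          (le_of_eq hYc) (x d) (hx d hdkk).2
        rwa [Finset.insert_erase hxd] at h1
end

section
/- Let V be a finite nonempty set and L ⊆ V with 2 ≤ d ≤ |L| < |V|. Then B_d(V,L) = (V, B_d) with B_d = P_{≤d}(V) ∪ {X ∈ P_{d+1}(V) : |X ∩ L| = d} is a boolean representable paving simplicial complex of dimension d. -/
open scoped Classical

variable {V : Type*}

section Aux
variable [DecidableEq V]

def preX {k : ℕ} (x : Fin k → V) (j : ℕ) : Finset V :=
  Finset.image x (Finset.univ.filter fun i : Fin k => (i : ℕ) < j)

lemma preX_mono {k : ℕ} (x : Fin k → V) {j j' : ℕ} (h : j ≤ j') : preX x j ⊆ preX x j' := by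
  apply Finset.image_subset_image
  intro i hi
  simp only [Finset.mem_filter, Finset.mem_univ, true_and] at hi ⊢
  omega

lemma preX_card {k : ℕ} (x : Fin k → V) (j : ℕ) : (preX x j).card ≤ j := by
  refine le_trans Finset.card_image_le ?_
  calc (Finset.univ.filter fun i : Fin k => (i:ℕ) < j).card
      ≤ (Finset.range j).card := Finset.card_le_card_of_injOn (fun i => (i:ℕ))
        (by intro a ha; simp at ha ⊢; exact ha) (fun a _ b _ h => Fin.ext h)
    _ = j := Finset.card_range j

lemma preX_succ {k : ℕ} (x : Fin k → V) {j : ℕ} (hj : j < k) :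
    preX x (j+1) = insert (x ⟨j, hj⟩) (preX x j) := by
  ext v
  simp only [preX, Finset.mem_image, Finset.mem_filter, Finset.mem_univ, true_and,
    Finset.mem_insert]
  constructor
  · rintro ⟨i, hi, rfl⟩
    rcases Nat.lt_succ_iff_lt_or_eq.mp hi with h | h
    · exact Or.inr ⟨i, h, rfl⟩
    · exact Or.inl (by congr 1; exact Fin.ext h)
  · rintro (rfl | ⟨i, hi, rfl⟩)
    · exact ⟨⟨j, hj⟩, Nat.lt_succ_self j, rfl⟩
    · exact ⟨i, Nat.lt_succ_of_lt hi, rfl⟩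

lemma notMem_preX {k : ℕ} {x : Fin k → V} (hx : Function.Injective x) {j : ℕ} (hj : j < k) :
    x ⟨j, hj⟩ ∉ preX x j := by
  simp only [preX, Finset.mem_image, Finset.mem_filter, Finset.mem_univ, true_and, not_exists]
  rintro i ⟨hi, hxi⟩
  cases hx hxi
  exact absurd hi (lt_irrefl _)

lemma preX_eq_image {k : ℕ} (x : Fin k → V) : preX x k = Finset.image x Finset.univ := by
  unfold preX; congr 1
  apply Finset.filter_true_of_mem
  intro i _; exact i.isLt

lemma exists_enumX {k : ℕ} {X : Finset V} (h : X.card = k) :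
    ∃ x : Fin k → V, Function.Injective x ∧ Finset.image x Finset.univ = X := by
  subst h
  refine ⟨fun i => (X.equivFin.symm i : V), ?_, ?_⟩
  · intro a b hab
    exact X.equivFin.symm.injective (Subtype.ext hab)
  · ext v
    simp only [Finset.mem_image, Finset.mem_univ, true_and]
    constructor
    · rintro ⟨i, rfl⟩; exact (X.equivFin.symm i).2
    · intro hv; exact ⟨X.equivFin ⟨v, hv⟩, by simp⟩

lemma isFlat_univ [Fintype V] (H : Set (Finset V)) : IsFlat H Finset.univ := by
  intro I _ _ p hp; exact absurd (Finset.mem_univ p) hp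

lemma isFlat_small {d : ℕ} {L F : Finset V} (h : F.card + 1 ≤ d) : IsFlat (Bd d L) F := by
  intro I _ hIF p hp
  left
  have h1 := Finset.card_insert_le p I
  have h2 := Finset.card_le_card hIF
  simp only [Set.mem_setOf_eq]
  omega

lemma isFlat_L {d : ℕ} {L : Finset V} : IsFlat (Bd d L) L := by
  intro I hI hIL p hp
  have hpI : p ∉ I := fun h => hp (hIL h)
  have hins : (insert p I).card = I.card + 1 := Finset.card_insert_of_notMem hpI
  have hIcapL : I ∩ L = I := Finset.inter_eq_left.mpr hIL
  rcases hI with h | ⟨h1, h2⟩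
  · simp only [Set.mem_setOf_eq] at h
    rcases lt_or_eq_of_le h with h' | h'
    · left
      simp only [Set.mem_setOf_eq]
      omega
    · right
      have hins2 : (insert p I) ∩ L = I := by
        rw [Finset.insert_inter_of_notMem hp, hIcapL]
      exact ⟨by omega, by rw [hins2]; exact h'⟩
  · exfalso; rw [hIcapL] at h2; omega

end Aux


lemma tr_subset_Bd [DecidableEq V] {d : ℕ} {L : Finset V} :
    Tr {F | IsFlat (Bd d L) F} ⊆ Bd d L := by
  intro X hX
  obtain ⟨k, x, C, hinj, hXimg, hCF, hchain, hx⟩ := hX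
  have key : ∀ j : ℕ, (hj : j ≤ k) →
      preX x j ∈ Bd d L ∧ preX x j ⊆ C ⟨j, Nat.lt_succ_of_le hj⟩ := by
    intro j
    induction j with
    | zero =>
      intro _
      constructor
      · left
        have he : preX x 0 = ∅ := by
          apply Finset.eq_empty_of_forall_notMem
          intro v hv
          simp [preX] at hv
        rw [he]
        simp only [Set.mem_setOf_eq, Finset.card_empty]
        exact Nat.zero_le d
      · intro v hv; simp [preX] at hv
    | succ j ih =>
      intro hj
      have hjk : j < k := hj
      obtain ⟨h1, h2⟩ := ih (le_of_lt hjk)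
      have hcs : (⟨j, hjk⟩ : Fin k).castSucc = ⟨j, Nat.lt_succ_of_le hjk.le⟩ := rfl
      have hsc : (⟨j, hjk⟩ : Fin k).succ = ⟨j+1, Nat.succ_lt_succ hjk⟩ := rfl
      have hflat : IsFlat (Bd d L) (C ⟨j, Nat.lt_succ_of_le hjk.le⟩) := hCF _
      obtain ⟨hm1, hm2⟩ := hx ⟨j, hjk⟩
      rw [hcs] at hm2
      rw [hsc] at hm1
      rw [preX_succ x hjk]
      refine ⟨hflat (preX x j) h1 h2 _ hm2, ?_⟩
      intro v hv
      rcases Finset.mem_insert.mp hv with rfl | hv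
      · exact hm1
      · have hch := hchain ⟨j, hjk⟩
        rw [hcs, hsc] at hch
        exact hch (h2 hv)
  have hfin := (key k le_rfl).1
  rw [preX_eq_image] at hfin
  rw [hXimg]
  exact hfin

lemma Bd_subset_tr [Fintype V] [DecidableEq V] {d : ℕ} {L : Finset V} (hd : 2 ≤ d)
    (hL : d ≤ L.card) :
    Bd d L ⊆ Tr {F | IsFlat (Bd d L) F} := by
  intro X hX
  rcases hX with hX | ⟨hX1, hX2⟩
  · -- case |X| ≤ d
    simp only [Set.mem_setOf_eq] at hX
    obtain ⟨x, hxinj, hximg⟩ := exists_enumX (rfl : X.card = X.card)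
    refine ⟨X.card, x, fun i => if (i:ℕ) < X.card then preX x (i:ℕ) else Finset.univ,
      hxinj, hximg.symm, ?_, ?_, ?_⟩
    · intro i
      by_cases h : (i:ℕ) < X.card
      · simp only [if_pos h]
        exact isFlat_small (by have := preX_card x (i:ℕ); omega)
      · simp only [if_neg h]
        exact isFlat_univ _
    · intro i
      have hik : (i:ℕ) < X.card := i.isLt
      simp only [Fin.coe_castSucc, Fin.val_succ]
      split_ifs <;>
        first
          | exact preX_mono x (Nat.le_succ _)
          | exact Finset.subset_univ _
          | omega
    · intro i
      have hik : (i:ℕ) < X.card := i.isLt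
      constructor
      · simp only [Fin.val_succ]
        split_ifs with h
        · rw [preX_succ x hik]
          exact Finset.mem_insert_self _ _
        · exact Finset.mem_univ _
      · simp only [Fin.coe_castSucc, if_pos hik]
        exact notMem_preX hxinj hik
  · -- case |X| = d+1
    obtain ⟨s, hsinj, hsimg⟩ := exists_enumX hX2
    have hsd : (X \ L).card = 1 := by
      have := Finset.card_inter_add_card_sdiff X L
      omega
    obtain ⟨y, hy⟩ := Finset.card_eq_one.mp hsd
    have hyXL : y ∈ X \ L := hy ▸ Finset.mem_singleton_self y
    have hyX : y ∈ X := (Finset.mem_sdiff.mp hyXL).1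
    have hyL : y ∉ L := (Finset.mem_sdiff.mp hyXL).2
    have hsXL : ∀ i : Fin d, s i ∈ X ∩ L := by
      intro i; rw [← hsimg]; exact Finset.mem_image_of_mem s (Finset.mem_univ i)
    set x : Fin (d+1) → V := fun i => if h : (i:ℕ) < d then s ⟨(i:ℕ), h⟩ else y with hxdef
    have hxval_lt : ∀ (i : Fin (d+1)) (h : (i:ℕ) < d), x i = s ⟨(i:ℕ), h⟩ := by
      intro i h; simp only [hxdef, dif_pos h]
    have hxval_ge : ∀ (i : Fin (d+1)), ¬ (i:ℕ) < d → x i = y := by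
      intro i h; simp only [hxdef, dif_neg h]
    have hxinj : Function.Injective x := by
      intro a b hab
      by_cases ha : (a:ℕ) < d <;> by_cases hb : (b:ℕ) < d
      · rw [hxval_lt a ha, hxval_lt b hb] at hab
        have hv := hsinj hab
        simp only [Fin.mk.injEq] at hv
        exact Fin.ext hv
      · rw [hxval_lt a ha, hxval_ge b hb] at hab
        exact absurd ((Finset.mem_inter.mp (hab ▸ hsXL ⟨(a:ℕ), ha⟩)).2) hyL
      · rw [hxval_ge a ha, hxval_lt b hb] at hab
        exact absurd ((Finset.mem_inter.mp (hab.symm ▸ hsXL ⟨(b:ℕ), hb⟩)).2) hyL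
      · have h1 := a.isLt; have h2 := b.isLt
        exact Fin.ext (by omega)
    have hximg : Finset.image x Finset.univ = X := by
      apply Finset.Subset.antisymm
      · intro v hv
        obtain ⟨i, _, rfl⟩ := Finset.mem_image.mp hv
        by_cases h : (i:ℕ) < d
        · rw [hxval_lt i h]
          exact (Finset.mem_inter.mp (hsXL ⟨(i:ℕ), h⟩)).1
        · rw [hxval_ge i h]; exact hyX
      · intro v hv
        by_cases h : v ∈ L
        · have hv2 : v ∈ X ∩ L := Finset.mem_inter.mpr ⟨hv, h⟩
          rw [← hsimg] at hv2
          obtain ⟨i, _, rfl⟩ := Finset.mem_image.mp hv2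
          refine Finset.mem_image.mpr ⟨⟨(i:ℕ), Nat.lt_succ_of_lt i.isLt⟩, Finset.mem_univ _, ?_⟩
          rw [hxval_lt _ i.isLt]
        · have hv2 : v ∈ X \ L := Finset.mem_sdiff.mpr ⟨hv, h⟩
          rw [hy] at hv2
          refine Finset.mem_image.mpr ⟨⟨d, Nat.lt_succ_self d⟩, Finset.mem_univ _, ?_⟩
          rw [hxval_ge _ (by simp)]
          exact (Finset.mem_singleton.mp hv2).symm
    have hpreL : ∀ j : ℕ, j ≤ d → preX x j ⊆ L := by
      intro j hj v hv
      simp only [preX, Finset.mem_image, Finset.mem_filter, Finset.mem_univ, true_and] at hv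
      obtain ⟨i, hi, rfl⟩ := hv
      have h : (i:ℕ) < d := lt_of_lt_of_le hi hj
      rw [hxval_lt i h]
      exact (Finset.mem_inter.mp (hsXL ⟨(i:ℕ), h⟩)).2
    refine ⟨d+1, x,
      fun i => if (i:ℕ) < d then preX x (i:ℕ) else if (i:ℕ) = d then L else Finset.univ,
      hxinj, hximg.symm, ?_, ?_, ?_⟩
    · intro i
      dsimp only
      split_ifs with h1 h2
      · exact isFlat_small (by have := preX_card x (i:ℕ); omega)
      · exact isFlat_L
      · exact isFlat_univ _
    · intro i
      have hlt := i.isLt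
      simp only [Fin.coe_castSucc, Fin.val_succ]
      split_ifs <;>
        first
          | exact preX_mono x (Nat.le_succ _)
          | exact hpreL _ (by omega)
          | exact Finset.subset_univ _
          | omega
    · intro i
      have hlt : (i:ℕ) < d + 1 := i.isLt
      constructor
      · simp only [Fin.val_succ]
        split_ifs with h1 h2
        · rw [preX_succ x hlt]
          exact Finset.mem_insert_self _ _
        · rw [hxval_lt i (by omega)]
          exact (Finset.mem_inter.mp (hsXL _)).2
        · exact Finset.mem_univ _
      · simp only [Fin.coe_castSucc]
        split_ifs with h1 h2
        · exact notMem_preX hxinj hlt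
        · rw [hxval_ge i (by omega)]
          exact hyL
        · omega


theorem stmt_11 [Fintype V] [DecidableEq V] [Nonempty V] (d : ℕ) (L : Finset V)
    (hd : 2 ≤ d) (hL : d ≤ L.card) (hLV : L.card < Fintype.card V) :
    IsSimplicialComplex (Bd d L) ∧ PavingDim (Bd d L) d ∧
      BooleanRepresentable (Bd d L) := by
  have hLne : ∃ p : V, p ∉ L := by
    by_contra h
    push_neg at h
    have hu : L = Finset.univ := Finset.eq_univ_of_forall h
    rw [hu, Finset.card_univ] at hLV
    exact lt_irrefl _ hLV
  obtain ⟨p, hp⟩ := hLne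
  obtain ⟨S, hSL, hScard⟩ := Finset.exists_subset_card_eq hL
  have hpS : p ∉ S := fun h => hp (hSL h)
  have hface : insert p S ∈ Bd d L := by
    right
    refine ⟨?_, ?_⟩
    · rw [Finset.card_insert_of_notMem hpS, hScard]
    · rw [Finset.insert_inter_of_notMem hp, Finset.inter_eq_left.mpr hSL, hScard]
  refine ⟨⟨?_, ?_⟩, ⟨?_, ⟨insert p S, hface, ?_⟩, ?_⟩, ?_⟩
  · intro v
    left
    simp only [Set.mem_setOf_eq, Finset.card_singleton]
    omega
  · intro X hX Y hY
    by_cases h : Y.card ≤ d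
    · left; exact h
    · have hXc : X.card ≤ d + 1 := by
        rcases hX with h' | ⟨h', _⟩ <;> (try simp only [Set.mem_setOf_eq] at h') <;> omega
      have hYX := Finset.card_le_card hY
      have hYeq : Y = X := Finset.eq_of_subset_of_card_le hY (by omega)
      rw [hYeq]; exact hX
  · intro X hXcard
    left
    exact le_of_eq hXcard
  · rw [Finset.card_insert_of_notMem hpS, hScard]
  · intro X hX
    rcases hX with h | ⟨h, _⟩ <;> (try simp only [Set.mem_setOf_eq] at h) <;> omega
  · exact Set.Subset.antisymm (Bd_subset_tr hd hL) tr_subset_Bd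
end

section
/- Let d ≥ 2 and S = (V,H) be a paving simplicial complex of dimension d. Then S is a truncated boolean representable simplicial complex if and only if H = ∪_{L ∈ 𝓛} B_d(V,L) for some nonempty family 𝓛 of subsets L of V with d ≤ |L| < |V|, where B_d(V,L) = P_{≤d}(V) ∪ {X ∈ P_{d+1}(V) : |X ∩ L| = d}. -/
open scoped Classical

variable {V : Type*}

/-!
Both directions pass through one condition: every `(d+1)`-face `X` meets some member `G` of
`ε(S)` in exactly `d` points. If `S = T_k(S')` with `S'` boolean representable, then `k ≥ d + 1`,
and the last step of a chain of flats of `S'` transversal to `X` is such a `G`, since flats of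
`S'` lie in `ε(S)`. Conversely, under this condition `S = T_{d+1}(V, Tr ε(S))`, and `Tr F` is
boolean representable whenever `F` is closed under intersection and contains `V`, as `ε(S)` is.
The members `L` of `ε(S)` with `d ≤ |L| < |V|` form the required family, and every set `L` of
such a family lies in `ε(S)`.
-/

section ChainTransversal

variable [DecidableEq V] {F F' : Set (Finset V)} {X Y T G : Finset V}

/-- An inductive form of `Transversal`: `X` is a transversal of the successive differences of a
chain in `F` with top `T`. -/
inductive ChainTransversal (F : Set (Finset V)) : Finset V → Finset V → Prop
  | base {T : Finset V} (hT : T ∈ F) : ChainTransversal F ∅ T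
  | step {X T T' : Finset V} {p : V} (h : ChainTransversal F X T) (hT' : T' ∈ F)
      (hTT' : T ⊆ T') (hpT' : p ∈ T') (hpT : p ∉ T) : ChainTransversal F (insert p X) T'

namespace ChainTransversal

theorem subset_top (h : ChainTransversal F X T) : X ⊆ T := by
  induction h with
  | base => exact Finset.empty_subset _
  | step _ _ hTT' hpT' _ ih => exact Finset.insert_subset hpT' (ih.trans hTT')

theorem top_mem (h : ChainTransversal F X T) : T ∈ F := by
  cases h with
  | base hT => exact hT
  | step _ hT' => exact hT'

theorem mono (hFF' : F ⊆ F') (h : ChainTransversal F X T) : ChainTransversal F' X T := by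
  induction h with
  | base hT => exact .base (hFF' hT)
  | step _ hT' hTT' hpT' hpT ih => exact .step ih (hFF' hT') hTT' hpT' hpT

theorem exists_of_subset (h : ChainTransversal F X T) (hYX : Y ⊆ X) :
    ∃ T' ⊆ T, ChainTransversal F Y T' := by
  induction h generalizing Y with
  | base hT =>
    rw [Finset.subset_empty.mp hYX]
    exact ⟨_, subset_rfl, .base hT⟩
  | @step X T T' p h hT' hTT' hpT' hpT ih =>
    obtain ⟨T'', hT''T, hT''⟩ := ih (Finset.subset_insert_iff.mp hYX)
    by_cases hpY : p ∈ Y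
    · refine ⟨T', subset_rfl, ?_⟩
      simpa [Finset.insert_erase hpY] using
        hT''.step hT' (hT''T.trans hTT') hpT' fun hp => hpT (hT''T hp)
    · rw [Finset.erase_eq_of_notMem hpY] at hT''
      exact ⟨T'', hT''T.trans hTT', hT''⟩

theorem inter_top (hF : ∀ A ∈ F, ∀ B ∈ F, A ∩ B ∈ F) (hG : G ∈ F)
    (h : ChainTransversal F X T) (hXG : X ⊆ G) : ChainTransversal F X (T ∩ G) := by
  induction h with
  | base hT => exact .base (hF _ hT G hG)
  | step _ hT' hTT' hpT' hpT ih =>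
    obtain ⟨hpG, hXG⟩ := Finset.insert_subset_iff.mp hXG
    exact (ih hXG).step (hF _ hT' G hG) (Finset.inter_subset_inter_right hTT')
      (Finset.mem_inter.mpr ⟨hpT', hpG⟩) fun hp => hpT (Finset.mem_inter.mp hp).1

theorem exists_card_inter_add_one (h : ChainTransversal F X T) (hX : X.Nonempty) :
    ∃ G ∈ F, (X ∩ G).card + 1 = X.card := by
  cases h with
  | base => exact absurd hX Finset.not_nonempty_empty
  | @step X₀ T₀ _ p h _ _ _ hpT₀ =>
    have hpX₀ : p ∉ X₀ := fun hp => hpT₀ (h.subset_top hp)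
    refine ⟨T₀, h.top_mem, ?_⟩
    rw [Finset.insert_inter_of_notMem hpT₀, Finset.inter_eq_left.mpr h.subset_top,
      Finset.card_insert_of_notMem hpX₀]

theorem mem_of_forall_insert_mem {H : Set (Finset V)} {m : ℕ} (hempty : ∅ ∈ H)
    (hF : ∀ G ∈ F, ∀ Y ∈ H, Y ⊆ G → Y.card < m → ∀ p ∉ G, insert p Y ∈ H)
    (h : ChainTransversal F X T) (hX : X.card ≤ m) : X ∈ H := by
  induction h with
  | base => exact hempty
  | @step X₀ T₀ _ p h _ _ _ hpT₀ ih =>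
    have hpX₀ : p ∉ X₀ := fun hp => hpT₀ (h.subset_top hp)
    rw [Finset.card_insert_of_notMem hpX₀] at hX
    exact hF T₀ h.top_mem X₀ (ih (by omega)) h.subset_top (by omega) p hpT₀

end ChainTransversal

theorem image_univ_snoc {k : ℕ} (x : Fin k → V) (p : V) :
    Finset.univ.image (Fin.snoc x p : Fin (k + 1) → V) = insert p (Finset.univ.image x) := by
  ext a
  simp [Fin.exists_fin_succ', eq_comm, or_comm]

theorem ChainTransversal.of_chain {k : ℕ} (x : Fin k → V) (C : Fin (k + 1) → Finset V)
    (hx : Function.Injective x) (hC : ∀ i, C i ∈ F)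
    (hchain : ∀ i : Fin k, C i.castSucc ⊆ C i.succ)
    (hdiff : ∀ i : Fin k, x i ∈ C i.succ ∧ x i ∉ C i.castSucc) :
    ChainTransversal F (Finset.univ.image x) (C (Fin.last k)) := by
  induction k with
  | zero => simpa using ChainTransversal.base (hC (Fin.last 0))
  | succ k ih =>
    have h := ih (Fin.init x) (Fin.init C) (hx.comp (Fin.castSucc_injective k))
      (fun i => hC _) (fun i => hchain i.castSucc) (fun i => hdiff i.castSucc)
    rw [← Fin.snoc_init_self x, image_univ_snoc]
    exact h.step (hC _) (hchain (Fin.last k)) (hdiff (Fin.last k)).1 (hdiff (Fin.last k)).2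

theorem ChainTransversal.exists_chain {T : Finset V} (h : ChainTransversal F X T) :
    ∃ (k : ℕ) (x : Fin k → V) (C : Fin (k + 1) → Finset V),
      Function.Injective x ∧ X = Finset.univ.image x ∧ (∀ i, C i ∈ F) ∧
      (∀ i : Fin k, C i.castSucc ⊆ C i.succ) ∧
      (∀ i : Fin k, x i ∈ C i.succ ∧ x i ∉ C i.castSucc) ∧ C (Fin.last k) = T := by
  induction h with
  | base hT => exact ⟨0, Fin.elim0, fun _ => _, Function.injective_of_subsingleton _, by simp,
      fun _ => hT, fun i => i.elim0, fun i => i.elim0, rfl⟩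
  | @step X T T' p h hT' hTT' hpT' hpT ih =>
    obtain ⟨k, x, C, hx, rfl, hC, hchain, hdiff, rfl⟩ := ih
    refine ⟨k + 1, Fin.snoc x p, Fin.snoc C T', ?_, (image_univ_snoc x p).symm, ?_, ?_, ?_, ?_⟩
    · refine Fin.snoc_injective_of_injective hx ?_
      rintro ⟨i, rfl⟩
      exact hpT (h.subset_top (by simp))
    · intro i
      induction i using Fin.lastCases <;> simp [hT', hC]
    · intro i
      induction i using Fin.lastCases with
      | last => simpa using hTT'
      | cast i => simpa only [Fin.succ_castSucc, Fin.snoc_castSucc] using hchain i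
    · intro i
      induction i using Fin.lastCases with
      | last => simpa using ⟨hpT', hpT⟩
      | cast i => simpa only [Fin.succ_castSucc, Fin.snoc_castSucc] using hdiff i
    · simp

theorem mem_Tr_iff : X ∈ Tr F ↔ ∃ T, ChainTransversal F X T := by
  constructor
  · rintro ⟨k, x, C, hx, rfl, hC, hchain, hdiff⟩
    exact ⟨_, .of_chain x C hx hC hchain hdiff⟩
  · rintro ⟨T, h⟩
    obtain ⟨k, x, C, hx, hX, hC, hchain, hdiff, -⟩ := h.exists_chain
    exact ⟨k, x, C, hx, hX, hC, hchain, hdiff⟩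

theorem Tr_mono {F' : Set (Finset V)} (hFF' : F ⊆ F') : Tr F ⊆ Tr F' := fun _ hX =>
  let ⟨T, h⟩ := mem_Tr_iff.mp hX
  mem_Tr_iff.mpr ⟨T, h.mono hFF'⟩

theorem mem_Tr_of_subset (hX : X ∈ Tr F) (hYX : Y ⊆ X) : Y ∈ Tr F :=
  let ⟨_, h⟩ := mem_Tr_iff.mp hX
  let ⟨T', _, h'⟩ := h.exists_of_subset hYX
  mem_Tr_iff.mpr ⟨T', h'⟩

theorem empty_mem_Tr (hG : G ∈ F) : ∅ ∈ Tr F :=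
  mem_Tr_iff.mpr ⟨G, .base hG⟩

theorem isFlat_Tr [Fintype V] (hF : ∀ A ∈ F, ∀ B ∈ F, A ∩ B ∈ F) (huniv : Finset.univ ∈ F)
    (hG : G ∈ F) : IsFlat (Tr F) G := by
  intro I hI hIG p hpG
  obtain ⟨T, h⟩ := mem_Tr_iff.mp hI
  exact mem_Tr_iff.mpr ⟨_, (h.inter_top hF hG hIG).step huniv (Finset.subset_univ _)
    (Finset.mem_univ p) fun hp => hpG (Finset.mem_inter.mp hp).2⟩

theorem booleanRepresentable_Tr [Fintype V] (hF : ∀ A ∈ F, ∀ B ∈ F, A ∩ B ∈ F)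
    (huniv : Finset.univ ∈ F) : BooleanRepresentable (Tr F) := by
  refine (Tr_mono fun G hG => isFlat_Tr hF huniv hG).antisymm fun X hX => ?_
  obtain ⟨T, h⟩ := mem_Tr_iff.mp hX
  exact h.mem_of_forall_insert_mem (m := X.card) (empty_mem_Tr huniv)
    (fun G (hG : IsFlat _ G) Y hY hYG _ p hpG => hG Y hY hYG p hpG) le_rfl

end ChainTransversal

theorem Finset.exists_notMem_insert_inter_eq [DecidableEq V] {X G : Finset V}
    (h : (X ∩ G).card + 1 = X.card) : ∃ p ∉ G, insert p (X ∩ G) = X := by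
  have hcard : (X \ G).card = 1 := by
    have := Finset.card_sdiff_add_card_inter X G
    omega
  obtain ⟨p, hp⟩ := Finset.card_eq_one.mp hcard
  refine ⟨p, (Finset.mem_sdiff.mp (hp ▸ Finset.mem_singleton_self p)).2, ?_⟩
  rw [Finset.insert_eq, ← hp, Finset.sdiff_union_inter]

theorem mem_of_card_le [Fintype V] {H : Set (Finset V)} {d : ℕ}
    (hdown : ∀ X ∈ H, ∀ Y ⊆ X, Y ∈ H) (hpav : ∀ X : Finset V, X.card = d → X ∈ H)
    (hV : d ≤ Fintype.card V) {X : Finset V} (hX : X.card ≤ d) : X ∈ H :=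
  let ⟨Y, hXY, hY⟩ := Finset.exists_superset_card_eq hX hV
  hdown Y (hpav Y hY) X hXY

section Eps

variable [DecidableEq V] {H : Set (Finset V)} {d : ℕ} {A B G L : Finset V}

theorem inter_mem_eps (hA : A ∈ eps H d) (hB : B ∈ eps H d) : A ∩ B ∈ eps H d := by
  intro Y hY hYAB hYd p hp
  rw [Finset.subset_inter_iff] at hYAB
  by_cases hpA : p ∈ A
  · exact hB Y hY hYAB.2 hYd p fun hpB => hp (Finset.mem_inter.mpr ⟨hpA, hpB⟩)
  · exact hA Y hY hYAB.1 hYd p hpA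

theorem univ_mem_eps [Fintype V] : Finset.univ ∈ eps H d :=
  fun _ _ _ _ p hp => absurd (Finset.mem_univ p) hp

theorem mem_eps_of_card_lt (hsmall : ∀ X : Finset V, X.card ≤ d → X ∈ H) (hG : G.card < d) :
    G ∈ eps H d := by
  intro Y _ hYG _ p _
  exact hsmall _ ((Finset.card_insert_le p Y).trans (by grw [hYG]; omega))

theorem mem_eps_of_Bd_subset (hsmall : ∀ X : Finset V, X.card ≤ d → X ∈ H) (hL : Bd d L ⊆ H) :
    L ∈ eps H d := by
  intro Y _ hYL hYd p hpL
  have hpY : p ∉ Y := fun hp => hpL (hYL hp)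
  rcases hYd.lt_or_eq with hYd | hYd
  · exact hsmall _ (by rw [Finset.card_insert_of_notMem hpY]; omega)
  · refine hL (Or.inr ⟨by rw [Finset.card_insert_of_notMem hpY, hYd], ?_⟩)
    rwa [Finset.insert_inter_of_notMem hpL, Finset.inter_eq_left.mpr hYL]

theorem IsFlat.mem_eps_trunc {H' : Set (Finset V)} {k : ℕ} (hG : IsFlat H' G)
    (hk : d + 1 ≤ k) : G ∈ eps (trunc H' k) d := by
  intro Y hY hYG hYd p hpG
  exact ⟨hG Y hY.1 hYG p hpG, (Finset.card_insert_le p Y).trans (by omega)⟩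

theorem isFlat_Tr_eps [Fintype V] (hG : G ∈ eps H d) :
    IsFlat (Tr (eps H d)) G :=
  isFlat_Tr (fun _ hA _ hB => inter_mem_eps hA hB) univ_mem_eps hG

theorem mem_Tr_eps_of_card_le [Fintype V] (hsmall : ∀ X : Finset V, X.card ≤ d → X ∈ H)
    {X : Finset V} (hX : X.card ≤ d) : X ∈ Tr (eps H d) := by
  induction X using Finset.induction_on with
  | empty => exact empty_mem_Tr univ_mem_eps
  | insert a s ha ih =>
    rw [Finset.card_insert_of_notMem ha] at hX
    exact isFlat_Tr_eps (mem_eps_of_card_lt hsmall (by omega)) s (ih (by omega)) subset_rfl a ha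

def EpsCovers (H : Set (Finset V)) (d : ℕ) : Prop :=
  ∀ X ∈ H, X.card = d + 1 → ∃ G ∈ eps H d, (X ∩ G).card = d

theorem epsCovers_of_isTBRSC (hH : IsTBRSC H) (hface : ∃ X ∈ H, X.card = d + 1) :
    EpsCovers H d := by
  obtain ⟨H', k, -, -, hH', rfl⟩ := hH
  obtain ⟨Z, hZ, hZd⟩ := hface
  intro X hX hXd
  obtain ⟨T, h⟩ := mem_Tr_iff.mp (hH' ▸ hX.1)
  obtain ⟨G, hG, hXG⟩ := h.exists_card_inter_add_one (Finset.card_pos.mp (by omega))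
  exact ⟨G, IsFlat.mem_eps_trunc hG (hZd ▸ hZ.2), by omega⟩

theorem trunc_Tr_eps [Fintype V] (hsmall : ∀ X : Finset V, X.card ≤ d → X ∈ H)
    (hbound : ∀ X ∈ H, X.card ≤ d + 1) (hcov : EpsCovers H d) :
    trunc (Tr (eps H d)) (d + 1) = H := by
  ext X
  constructor
  · rintro ⟨hX, hXd⟩
    obtain ⟨T, h⟩ := mem_Tr_iff.mp hX
    exact h.mem_of_forall_insert_mem (hsmall ∅ (by simp))
      (fun G (hG : G ∈ eps H d) Y hY hYG hYd => hG Y hY hYG (Nat.lt_succ_iff.mp hYd)) hXd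
  · intro hX
    refine ⟨?_, hbound X hX⟩
    rcases (hbound X hX).lt_or_eq with hXd | hXd
    · exact mem_Tr_eps_of_card_le hsmall (Nat.lt_succ_iff.mp hXd)
    obtain ⟨G, hG, hXG⟩ := hcov X hX hXd
    obtain ⟨p, hpG, hpX⟩ := Finset.exists_notMem_insert_inter_eq (X := X) (G := G) (by omega)
    rw [← hpX]
    exact isFlat_Tr_eps hG _ (mem_Tr_eps_of_card_le hsmall hXG.le) Finset.inter_subset_right p hpG

theorem isTBRSC_of_epsCovers [Fintype V] (hsmall : ∀ X : Finset V, X.card ≤ d → X ∈ H)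
    (hbound : ∀ X ∈ H, X.card ≤ d + 1) (hsingleton : ∀ v : V, {v} ∈ H) (hcov : EpsCovers H d) :
    IsTBRSC H := by
  have htrunc := trunc_Tr_eps hsmall hbound hcov
  refine ⟨Tr (eps H d), d + 1, by omega, ⟨fun v => ?_, fun X hX Y hYX => mem_Tr_of_subset hX hYX⟩,
    booleanRepresentable_Tr (fun _ hA _ hB => inter_mem_eps hA hB) univ_mem_eps, htrunc.symm⟩
  exact (htrunc ▸ hsingleton v : {v} ∈ trunc _ _).1

theorem epsCovers_of_eq_Bd (hsmall : ∀ X : Finset V, X.card ≤ d → X ∈ H) {𝓛 : Set (Finset V)}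
    (hH : H = {X : Finset V | ∃ L ∈ 𝓛, X ∈ Bd d L}) : EpsCovers H d := by
  intro X hX hXd
  obtain ⟨L, hL, hXL⟩ := hH ▸ hX
  refine ⟨L, mem_eps_of_Bd_subset hsmall fun Y hY => hH ▸ ⟨L, hL, hY⟩, ?_⟩
  rcases hXL with hXL | ⟨-, hXL⟩
  · have : X.card ≤ d := hXL
    omega
  · exact hXL

theorem exists_Bd_of_epsCovers [Fintype V] (hsmall : ∀ X : Finset V, X.card ≤ d → X ∈ H)
    (hbound : ∀ X ∈ H, X.card ≤ d + 1) (hface : ∃ X ∈ H, X.card = d + 1)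
    (hcov : EpsCovers H d) :
    ∃ 𝓛 : Set (Finset V), 𝓛.Nonempty ∧ (∀ L ∈ 𝓛, d ≤ L.card ∧ L ≠ Finset.univ) ∧
      H = {X : Finset V | ∃ L ∈ 𝓛, X ∈ Bd d L} := by
  set 𝓛 := {L ∈ eps H d | d ≤ L.card ∧ L ≠ Finset.univ}
  have hcov' : ∀ X ∈ H, X.card = d + 1 → ∃ L ∈ 𝓛, (X ∩ L).card = d := by
    intro X hX hXd
    obtain ⟨G, hG, hXG⟩ := hcov X hX hXd
    refine ⟨G, ⟨hG, hXG ▸ Finset.card_le_card Finset.inter_subset_right, ?_⟩, hXG⟩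
    rintro rfl
    rw [Finset.inter_univ] at hXG
    omega
  obtain ⟨Z, hZ, hZd⟩ := hface
  obtain ⟨L₀, hL₀, -⟩ := hcov' Z hZ hZd
  refine ⟨𝓛, ⟨L₀, hL₀⟩, fun L hL => hL.2, Set.ext fun X => ⟨fun hX => ?_, ?_⟩⟩
  · rcases (hbound X hX).lt_or_eq with hXd | hXd
    · exact ⟨L₀, hL₀, Or.inl (Nat.lt_succ_iff.mp hXd)⟩
    · obtain ⟨L, hL, hXL⟩ := hcov' X hX hXd
      exact ⟨L, hL, Or.inr ⟨hXd, hXL⟩⟩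
  · rintro ⟨L, hL, hXd | ⟨hXd, hXL⟩⟩
    · exact hsmall X hXd
    obtain ⟨p, hpL, hpX⟩ := Finset.exists_notMem_insert_inter_eq (X := X) (G := L) (by omega)
    rw [← hpX]
    exact hL.1 _ (hsmall _ hXL.le) Finset.inter_subset_right hXL.le p hpL

end Eps

theorem stmt_12_general [Fintype V] [DecidableEq V] (d : ℕ)
    (H : Set (Finset V)) (hS : IsSimplicialComplex H) (hp : PavingDim H d) :
    IsTBRSC H ↔
      ∃ 𝓛 : Set (Finset V), 𝓛.Nonempty ∧
        (∀ L ∈ 𝓛, d ≤ L.card ∧ L ≠ Finset.univ) ∧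
        H = {X : Finset V | ∃ L ∈ 𝓛, X ∈ Bd d L} := by
  obtain ⟨hpav, hface, hbound⟩ := hp
  have hV : d ≤ Fintype.card V := by
    obtain ⟨Z, -, hZ⟩ := hface
    have := Finset.card_le_univ Z
    omega
  have hsmall : ∀ X : Finset V, X.card ≤ d → X ∈ H := fun X => mem_of_card_le hS.2 hpav hV
  constructor
  · intro hH
    exact exists_Bd_of_epsCovers hsmall hbound hface (epsCovers_of_isTBRSC hH hface)
  · rintro ⟨𝓛, -, -, hH⟩
    exact isTBRSC_of_epsCovers hsmall hbound hS.1 (epsCovers_of_eq_Bd hsmall hH)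

theorem stmt_12 [Fintype V] [DecidableEq V] [Nonempty V] (d : ℕ) (hd : 2 ≤ d)
    (H : Set (Finset V)) (hS : IsSimplicialComplex H) (hp : PavingDim H d) :
    IsTBRSC H ↔
      ∃ 𝓛 : Set (Finset V), 𝓛.Nonempty ∧
        (∀ L ∈ 𝓛, d ≤ L.card ∧ L ≠ Finset.univ) ∧
        H = {X : Finset V | ∃ L ∈ 𝓛, X ∈ Bd d L} :=
  stmt_12_general d H hS hp
end
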